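/- Let X be a proper metric space, ρ : C₀(X) → B(H) a nondegenerate representation, and U1, U2 closed subsets of X that coarsely cover X. Let P_i denote the orthogonal projection of H onto H_{U_i} for i = 1, 2, and let P_{12} denote the orthogonal projection of H onto H_{U1 ∩ U2}. Suppose T1, T2 ∈ B(H) are locally compact operators of finite propagation with respect to ρ satisfying T_i = P_i T_i P_i for i = 1, 2, and suppose T1 + T2 is a compact operator. Then there exists an operator T_{12} ∈ B(H), locally compact and of finite propagation with respect to ρ and satisfying T_{12} = P_{12} T_{12} P_{12}, such that T_{12} − T1 and T_{12} + T2 are compact operators. -/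

import Mathlib

open scoped ZeroAtInfty
open ContinuousLinearMap

/-- For a representation `ρ : C₀(X) → B(H)` and a subset `Y ⊆ X`, the subspace `H_{I(Y)}`:
the closure of the linear span of `{ρ(f)v : f ∈ I(Y), v ∈ H}`, where
`I(Y) = {f ∈ C₀(X) : f(y) = 0 for all y ∈ Y}`. -/
noncomputable def HI {X H : Type*} [MetricSpace X]
    [NormedAddCommGroup H] [InnerProductSpace ℂ H] [CompleteSpace H]
    (ρ : C₀(X, ℂ) →⋆ₙₐ[ℂ] (H →L[ℂ] H)) (Y : Set X) : Submodule ℂ H :=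
  (Submodule.span ℂ
    {w : H | ∃ f : C₀(X, ℂ), (∀ y ∈ Y, f y = 0) ∧ ∃ v : H, w = ρ f v}).topologicalClosure

instance {X H : Type*} [MetricSpace X]
    [NormedAddCommGroup H] [InnerProductSpace ℂ H] [CompleteSpace H]
    (ρ : C₀(X, ℂ) →⋆ₙₐ[ℂ] (H →L[ℂ] H)) (Y : Set X) :
    Submodule.HasOrthogonalProjection (HI ρ Y)ᗮ := by
  haveI : CompleteSpace (HI ρ Y) :=
    (Submodule.isClosed_topologicalClosure _).completeSpace_coe
  infer_instance

/-- The orthogonal projection `P_Y` of `H` onto `H_Y = H_{I(Y)}ᗮ`, viewed as an operator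
`H → H`. -/
noncomputable def projHY {X H : Type*} [MetricSpace X]
    [NormedAddCommGroup H] [InnerProductSpace ℂ H] [CompleteSpace H]
    (ρ : C₀(X, ℂ) →⋆ₙₐ[ℂ] (H →L[ℂ] H)) (Y : Set X) : H →L[ℂ] H :=
  ((HI ρ Y)ᗮ).subtypeL ∘L Submodule.orthogonalProjectionOnto (HI ρ Y)ᗮ

/-- A representation `ρ : C₀(X) → B(H)` is nondegenerate if the closed linear span of
`{ρ(f)v : f ∈ C₀(X), v ∈ H}` equals `H`. -/
def Nondegenerate {X H : Type*} [MetricSpace X]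
    [NormedAddCommGroup H] [InnerProductSpace ℂ H] [CompleteSpace H]
    (ρ : C₀(X, ℂ) →⋆ₙₐ[ℂ] (H →L[ℂ] H)) : Prop :=
  (Submodule.span ℂ {w : H | ∃ f : C₀(X, ℂ), ∃ v : H, w = ρ f v}).topologicalClosure = ⊤

/-- An operator `T ∈ B(H)` is locally compact with respect to `ρ` if `ρ(f)T` and `Tρ(f)` are
compact operators for every `f ∈ C₀(X)`. -/
def LocallyCompactOp {X H : Type*} [MetricSpace X]
    [NormedAddCommGroup H] [InnerProductSpace ℂ H] [CompleteSpace H]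
    (ρ : C₀(X, ℂ) →⋆ₙₐ[ℂ] (H →L[ℂ] H)) (T : H →L[ℂ] H) : Prop :=
  ∀ f : C₀(X, ℂ), IsCompactOperator ⇑(ρ f ∘L T) ∧ IsCompactOperator ⇑(T ∘L ρ f)

/-- An operator `T ∈ B(H)` has finite propagation with respect to `ρ` if there exists
`R > 0` such that `ρ(f) T ρ(g) = 0` for all `f, g ∈ C₀(X)` with `d(x, y) > R` for every
`x ∈ supp f` and `y ∈ supp g`. -/
def FinitePropagation {X H : Type*} [MetricSpace X]
    [NormedAddCommGroup H] [InnerProductSpace ℂ H] [CompleteSpace H]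
    (ρ : C₀(X, ℂ) →⋆ₙₐ[ℂ] (H →L[ℂ] H)) (T : H →L[ℂ] H) : Prop :=
  ∃ R > (0 : ℝ), ∀ f g : C₀(X, ℂ),
    (∀ x ∈ Function.support ⇑f, ∀ y ∈ Function.support ⇑g, R < dist x y) →
    ρ f ∘L T ∘L ρ g = 0

/-- Subsets `U1, U2` coarsely cover `X` if for every `R > 0` the set
`{x ∈ X : d(x, X∖U1) ≤ R and d(x, X∖U2) ≤ R}` is metrically bounded. -/
def CoarselyCoversAll {X : Type*} [MetricSpace X] (U1 U2 : Set X) : Prop :=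
  ∀ R > (0 : ℝ), Bornology.IsBounded
    {x : X | (∃ y ∈ U1ᶜ, dist x y ≤ R) ∧ (∃ y ∈ U2ᶜ, dist x y ≤ R)}

/-!
Take `T₁₂ = P₂ T₁ P₂`. Every `P_Y` commutes with `ρ(C₀(X))`, hence conjugation by `P₂`
preserves local compactness and finite propagation, and the `P_Y` commute with each other.
Moreover `P₁ P₂ = P₁₂`: a function vanishing on `U₁ ∩ U₂` splits as `f₁ + f₂` with `fᵢ`
vanishing on `Uᵢ`, using the cut-off `d(x, U₁) / (d(x, U₁) + d(x, U₂))`. Then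
`T₁₂ = P₁₂ T₁₂ P₁₂` follows from `T₁ = P₁ T₁ P₁`, and `T₁₂ + T₂ = P₂ (T₁ + T₂) P₂` is compact,
hence so is `T₁₂ - T₁ = (T₁₂ + T₂) - (T₁ + T₂)`.
-/

theorem IsIdempotentElem.mul_conj_mul_of_commute {R : Type*} [Semigroup R] {p q t : R}
    (hp : IsIdempotentElem p) (hq : IsIdempotentElem q) (hpq : Commute p q)
    (ht : p * t * p = t) : p * q * (q * t * q) * (p * q) = q * t * q := by
  have hpp (y : R) : p * (p * y) = p * y := by rw [← mul_assoc, hp.eq]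
  have hqq (y : R) : q * (q * y) = q * y := by rw [← mul_assoc, hq.eq]
  rw [← ht]
  simp only [mul_assoc, hpp, hqq, hq.eq, hpq.symm.left_comm]

namespace Submodule

variable {𝕜 E : Type*} [RCLike 𝕜] [NormedAddCommGroup E] [InnerProductSpace 𝕜 E]

theorem commute_starProjection_of_mapsTo (K : Submodule 𝕜 E) [K.HasOrthogonalProjection]
    {T : E →L[𝕜] E} (hK : ∀ v ∈ K, T v ∈ K) (hKperp : ∀ v ∈ Kᗮ, T v ∈ Kᗮ) :
    Commute K.starProjection T := by
  ext v
  refine eq_starProjection_of_mem_orthogonal' (hK _ (K.starProjection_apply_mem v))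
    (hKperp _ (K.sub_starProjection_mem_orthogonal v)) ?_
  rw [mul_apply_eq_comp, ← map_add, add_sub_cancel]
  rfl

theorem starProjection_inf_of_commute [CompleteSpace E] {K L : Submodule 𝕜 E}
    [K.HasOrthogonalProjection] [L.HasOrthogonalProjection] [(K ⊓ L).HasOrthogonalProjection]
    (h : Commute K.starProjection L.starProjection) :
    (K ⊓ L).starProjection = K.starProjection * L.starProjection := by
  refine isStarProjection_starProjection.ext
    (isStarProjection_starProjection.mul isStarProjection_starProjection h) ?_
  rw [range_starProjection]
  ext v
  refine ⟨fun hv ↦ ⟨v, ?_⟩, ?_⟩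
  · change (K.starProjection * L.starProjection) v = v
    rw [mul_apply_eq_comp, starProjection_eq_self_iff.2 hv.2,
      starProjection_eq_self_iff.2 hv.1]
  · rintro ⟨u, rfl⟩
    refine ⟨K.starProjection_apply_mem _, ?_⟩
    rw [h.eq]
    exact L.starProjection_apply_mem _

end Submodule

open Metric

section BoundedMultiplier

variable {X E : Type*} [NormedAddCommGroup E] [NormedSpace ℝ E]

theorem norm_smul_le_of_abs_le_one {a : ℝ} (ha : |a| ≤ 1) (v : E) : ‖a • v‖ ≤ ‖v‖ := by
  rw [norm_smul, Real.norm_eq_abs]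
  exact mul_le_of_le_one_left (norm_nonneg _) ha

variable [TopologicalSpace X]

theorem continuous_smul_of_abs_le_one {θ : X → ℝ} {f : X → E} (hf : Continuous f)
    (hθ : ∀ x, |θ x| ≤ 1) (hθf : ∀ x, f x ≠ 0 → ContinuousAt θ x) :
    Continuous fun x ↦ θ x • f x := by
  refine continuous_iff_continuousAt.2 fun x ↦ ?_
  by_cases hx : f x = 0
  · have hlim := (hf.tendsto x).norm
    rw [hx, norm_zero] at hlim
    simpa [ContinuousAt, hx] using
      squeeze_zero_norm (fun y ↦ norm_smul_le_of_abs_le_one (hθ y) (f y)) hlim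
  · exact (hθf x hx).smul hf.continuousAt

theorem ZeroAtInftyContinuousMap.exists_apply_eq_smul_of_abs_le_one (f : C₀(X, E))
    {θ : X → ℝ} (hθ : ∀ x, |θ x| ≤ 1) (hθf : ∀ x, f x ≠ 0 → ContinuousAt θ x) :
    ∃ g : C₀(X, E), ∀ x, g x = θ x • f x :=
  ⟨⟨⟨fun x ↦ θ x • f x, continuous_smul_of_abs_le_one f.continuous hθ hθf⟩,
    squeeze_zero_norm (fun x ↦ norm_smul_le_of_abs_le_one (hθ x) (f x))
      (by simpa using (zero_at_infty f).norm)⟩, fun _ ↦ rfl⟩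

end BoundedMultiplier

section InfDistRatio

variable {X E : Type*} [MetricSpace X] [NormedAddCommGroup E] [NormedSpace ℝ E]

noncomputable def infDistRatio (U V : Set X) (x : X) : ℝ :=
  infDist x U / (infDist x U + infDist x V)

theorem abs_infDistRatio_le_one (U V : Set X) (x : X) : |infDistRatio U V x| ≤ 1 := by
  have hU := infDist_nonneg (x := x) (s := U)
  have hV := infDist_nonneg (x := x) (s := V)
  rw [infDistRatio, abs_of_nonneg (div_nonneg hU (add_nonneg hU hV))]
  exact div_le_one_of_le₀ (le_add_of_nonneg_right hV) (add_nonneg hU hV)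

theorem infDistRatio_of_mem_left {U : Set X} (V : Set X) {x : X} (hx : x ∈ U) :
    infDistRatio U V x = 0 := by
  simp [infDistRatio, infDist_zero_of_mem hx]

theorem infDistRatio_of_mem_right {U V : Set X} (hU : IsClosed U) (hU₀ : U.Nonempty) {x : X}
    (hxU : x ∉ U) (hxV : x ∈ V) : infDistRatio U V x = 1 := by
  rw [infDistRatio, infDist_zero_of_mem hxV, add_zero,
    div_self ((hU.notMem_iff_infDist_pos hU₀).1 hxU).ne']

theorem continuousAt_infDistRatio {U V : Set X} (hU : IsClosed U) (hV : IsClosed V)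
    (hU₀ : U.Nonempty) (hV₀ : V.Nonempty) {x : X} (hx : x ∉ U ∩ V) :
    ContinuousAt (infDistRatio U V) x := by
  have hpos : 0 < infDist x U + infDist x V := by
    rcases not_and_or.1 hx with hxU | hxV
    · exact add_pos_of_pos_of_nonneg ((hU.notMem_iff_infDist_pos hU₀).1 hxU) infDist_nonneg
    · exact add_pos_of_nonneg_of_pos infDist_nonneg ((hV.notMem_iff_infDist_pos hV₀).1 hxV)
  exact ((continuous_infDist_pt U).continuousAt).div
    ((continuous_infDist_pt U).add (continuous_infDist_pt V)).continuousAt hpos.ne'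

theorem ZeroAtInftyContinuousMap.exists_add_of_eq_zero_on_inter {U V : Set X}
    (hU : IsClosed U) (hV : IsClosed V) (f : C₀(X, E)) (hf : ∀ x ∈ U ∩ V, f x = 0) :
    ∃ g h : C₀(X, E), f = g + h ∧ (∀ x ∈ U, g x = 0) ∧ ∀ x ∈ V, h x = 0 := by
  rcases U.eq_empty_or_nonempty with rfl | hU₀
  · exact ⟨f, 0, (add_zero f).symm, by simp, fun _ _ ↦ rfl⟩
  rcases V.eq_empty_or_nonempty with rfl | hV₀
  · exact ⟨0, f, (zero_add f).symm, fun _ _ ↦ rfl, by simp⟩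
  obtain ⟨g, hg⟩ := f.exists_apply_eq_smul_of_abs_le_one (abs_infDistRatio_le_one U V)
    fun x hx ↦ continuousAt_infDistRatio hU hV hU₀ hV₀ fun hxUV ↦ hx (hf x hxUV)
  refine ⟨g, f - g, (add_sub_cancel g f).symm, fun x hx ↦ ?_, fun x hxV ↦ ?_⟩
  · rw [hg, infDistRatio_of_mem_left V hx, zero_smul]
  · by_cases hxU : x ∈ U
    · simp [hg, hf x ⟨hxU, hxV⟩]
    · simp [hg, infDistRatio_of_mem_right hU hU₀ hxU hxV]

end InfDistRatio

section Representation

variable {X H : Type*} [MetricSpace X]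
    [NormedAddCommGroup H] [InnerProductSpace ℂ H] [CompleteSpace H]
    (ρ : C₀(X, ℂ) →⋆ₙₐ[ℂ] (H →L[ℂ] H))

theorem inner_map_star_apply (f : C₀(X, ℂ)) (u v : H) :
    inner ℂ (ρ (star f) u) v = inner ℂ u (ρ f v) := by
  rw [map_star, ContinuousLinearMap.star_eq_adjoint, ContinuousLinearMap.adjoint_inner_left]

theorem commute_map_map (f g : C₀(X, ℂ)) : Commute (ρ f) (ρ g) := by
  rw [Commute, SemiconjBy, ← map_mul, ← map_mul, mul_comm]

variable {ρ}

theorem apply_mem_HI {Y : Set X} {f : C₀(X, ℂ)} (hf : ∀ y ∈ Y, f y = 0) (v : H) :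
    ρ f v ∈ HI ρ Y :=
  Submodule.le_topologicalClosure _ (Submodule.subset_span ⟨f, hf, v, rfl⟩)

theorem HI_le {Y : Set X} {p : Submodule ℂ H} (hp : IsClosed (p : Set H))
    (h : ∀ f : C₀(X, ℂ), (∀ y ∈ Y, f y = 0) → ∀ v, ρ f v ∈ p) : HI ρ Y ≤ p := by
  refine Submodule.topologicalClosure_minimal _ (Submodule.span_le.2 ?_) hp
  rintro _ ⟨f, hf, v, rfl⟩
  exact h f hf v

instance (Y : Set X) : (HI ρ Y).HasOrthogonalProjection :=
  have : CompleteSpace (HI ρ Y) := (Submodule.isClosed_topologicalClosure _).completeSpace_coe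
  inferInstance

theorem mem_orthogonal_HI_iff {Y : Set X} {v : H} :
    v ∈ (HI ρ Y)ᗮ ↔ ∀ f : C₀(X, ℂ), (∀ y ∈ Y, f y = 0) → ρ f v = 0 := by
  refine ⟨fun hv f hf ↦ ?_, fun hv ↦ (Submodule.mem_orthogonal _ v).2 fun u hu ↦ ?_⟩
  · have hstar : ∀ y ∈ Y, star f y = 0 := fun y hy ↦ by simp [hf y hy]
    rw [← inner_self_eq_zero (𝕜 := ℂ), ← inner_map_star_apply]
    exact (Submodule.mem_orthogonal _ v).1 hv _ (apply_mem_HI hstar _)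
  · refine Submodule.mem_orthogonal_singleton_iff_inner_left.1
      (HI_le (Submodule.isClosed_orthogonal _) (fun f hf w ↦ ?_) hu)
    have hstar : ∀ y ∈ Y, star f y = 0 := fun y hy ↦ by simp [hf y hy]
    rw [Submodule.mem_orthogonal_singleton_iff_inner_left, ← star_star f,
      inner_map_star_apply, hv _ hstar, inner_zero_right]

theorem isIdempotentElem_projHY (Y : Set X) : IsIdempotentElem (projHY ρ Y) :=
  Submodule.isIdempotentElem_starProjection _

theorem commute_projHY {S : H →L[ℂ] H} (hS : ∀ f, Commute S (ρ f)) (Y : Set X) :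
    Commute (projHY ρ Y) S := by
  refine Submodule.commute_starProjection_of_mapsTo _ (fun v hv ↦ ?_) fun v hv ↦ ?_
  · refine mem_orthogonal_HI_iff.2 fun f hf ↦ ?_
    rw [← mul_apply_eq_comp, ← (hS f).eq, mul_apply_eq_comp, mem_orthogonal_HI_iff.1 hv f hf,
      map_zero]
  · rw [Submodule.orthogonal_orthogonal] at hv ⊢
    refine HI_le (p := (HI ρ Y).comap (S : H →ₗ[ℂ] H))
      ((Submodule.isClosed_topologicalClosure _).preimage S.continuous) (fun f hf w ↦ ?_) hv
    change S (ρ f w) ∈ HI ρ Y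
    rw [← mul_apply_eq_comp, (hS f).eq, mul_apply_eq_comp]
    exact apply_mem_HI hf _

theorem commute_projHY_map (Y : Set X) (f : C₀(X, ℂ)) : Commute (projHY ρ Y) (ρ f) :=
  commute_projHY (fun g ↦ commute_map_map ρ f g) Y

theorem commute_projHY_projHY (Y Z : Set X) : Commute (projHY ρ Y) (projHY ρ Z) :=
  commute_projHY (fun f ↦ commute_projHY_map Z f) Y

theorem orthogonal_HI_inter {U V : Set X} (hU : IsClosed U) (hV : IsClosed V) :
    (HI ρ (U ∩ V))ᗮ = (HI ρ U)ᗮ ⊓ (HI ρ V)ᗮ := by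
  ext v
  simp only [Submodule.mem_inf, mem_orthogonal_HI_iff]
  refine ⟨fun hv ↦ ⟨fun f hf ↦ hv f fun y hy ↦ hf y hy.1, fun f hf ↦ hv f fun y hy ↦ hf y hy.2⟩,
    fun ⟨hvU, hvV⟩ f hf ↦ ?_⟩
  obtain ⟨g, h, rfl, hg, hh⟩ := f.exists_add_of_eq_zero_on_inter hU hV hf
  rw [map_add, add_apply, hvU g hg, hvV h hh, add_zero]

theorem projHY_inter {U V : Set X} (hU : IsClosed U) (hV : IsClosed V) :
    projHY ρ (U ∩ V) = projHY ρ U * projHY ρ V := by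
  have : ((HI ρ U)ᗮ ⊓ (HI ρ V)ᗮ).HasOrthogonalProjection := by
    rw [← orthogonal_HI_inter hU hV]; infer_instance
  exact (Submodule.starProjection_inj.2 (orthogonal_HI_inter hU hV)).trans
    (Submodule.starProjection_inf_of_commute (commute_projHY_projHY U V))

end Representation

section Operators

variable {X H : Type*} [MetricSpace X]
    [NormedAddCommGroup H] [InnerProductSpace ℂ H] [CompleteSpace H]
    {ρ : C₀(X, ℂ) →⋆ₙₐ[ℂ] (H →L[ℂ] H)} {S T : H →L[ℂ] H}

theorem LocallyCompactOp.conj (hT : LocallyCompactOp ρ T) (hS : ∀ f, Commute S (ρ f)) :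
    LocallyCompactOp ρ (S ∘L T ∘L S) := fun f ↦ by
  have hleft : ρ f * (S * (T * S)) = S * (ρ f * T * S) := by
    simp only [mul_assoc, (hS f).left_comm]
  have hright : S * (T * S) * ρ f = S * (T * ρ f * S) := by
    simp only [mul_assoc, (hS f).eq]
  constructor
  · rw [show ρ f ∘L (S ∘L T ∘L S) = S ∘L (ρ f ∘L T) ∘L S from hleft]
    exact ((hT f).1.comp_clm S).clm_comp S
  · rw [show (S ∘L T ∘L S) ∘L ρ f = S ∘L (T ∘L ρ f) ∘L S from hright]
    exact ((hT f).2.comp_clm S).clm_comp S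

theorem FinitePropagation.conj (hT : FinitePropagation ρ T) (hS : ∀ f, Commute S (ρ f)) :
    FinitePropagation ρ (S ∘L T ∘L S) := by
  obtain ⟨R, hR, hT⟩ := hT
  refine ⟨R, hR, fun f g hfg ↦ ?_⟩
  have hconj : ρ f * (S * (T * S) * ρ g) = S * (ρ f * (T * ρ g)) * S := by
    simp only [mul_assoc, (hS f).left_comm, (hS g).eq]
  change ρ f * (S * (T * S) * ρ g) = 0
  rw [hconj, show ρ f * (T * ρ g) = 0 from hT f g hfg, mul_zero, zero_mul]

end Operators

theorem difference_supported_on_intersection_general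
    (X : Type*) [MetricSpace X]
    (H : Type*) [NormedAddCommGroup H] [InnerProductSpace ℂ H] [CompleteSpace H]
    (ρ : C₀(X, ℂ) →⋆ₙₐ[ℂ] (H →L[ℂ] H))
    (U1 U2 : Set X) (hU1 : IsClosed U1) (hU2 : IsClosed U2)
    (T1 T2 : H →L[ℂ] H)
    (hlc1 : LocallyCompactOp ρ T1) (hfp1 : FinitePropagation ρ T1)
    (hP1 : T1 = projHY ρ U1 ∘L T1 ∘L projHY ρ U1)
    (hP2 : T2 = projHY ρ U2 ∘L T2 ∘L projHY ρ U2)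
    (hsum : IsCompactOperator ⇑(T1 + T2)) :
    ∃ T12 : H →L[ℂ] H,
      LocallyCompactOp ρ T12 ∧ FinitePropagation ρ T12 ∧
      T12 = projHY ρ (U1 ∩ U2) ∘L T12 ∘L projHY ρ (U1 ∩ U2) ∧
      IsCompactOperator ⇑(T12 - T1) ∧ IsCompactOperator ⇑(T12 + T2) := by
  set P1 := projHY ρ U1
  set P2 := projHY ρ U2
  have hcompact : IsCompactOperator ⇑(P2 ∘L T1 ∘L P2 + T2) := by
    rw [show P2 ∘L T1 ∘L P2 + T2 = P2 ∘L (T1 + T2) ∘L P2 by rw [add_comp, comp_add, ← hP2]]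
    exact (hsum.comp_clm P2).clm_comp P2
  refine ⟨P2 ∘L T1 ∘L P2, hlc1.conj (commute_projHY_map U2),
    hfp1.conj (commute_projHY_map U2), ?_, ?_, hcompact⟩
  · have hT1 : P1 * T1 * P1 = T1 := by rw [mul_assoc]; exact hP1.symm
    rw [projHY_inter hU1 hU2]
    simpa only [← mul_def, mul_assoc] using
      ((isIdempotentElem_projHY U1).mul_conj_mul_of_commute
        (isIdempotentElem_projHY U2) (commute_projHY_projHY U1 U2) hT1).symm
  · rw [show P2 ∘L T1 ∘L P2 - T1 = P2 ∘L T1 ∘L P2 + T2 - (T1 + T2) by abel]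
    exact hcompact.sub hsum

/-- Let `X` be a proper metric space, `ρ : C₀(X) → B(H)` a nondegenerate
representation, and `U1, U2` closed subsets of `X` that coarsely cover `X`. Let `P_i` denote
the orthogonal projection of `H` onto `H_{U_i}` for `i = 1, 2`, and let `P_{12}` denote the
orthogonal projection of `H` onto `H_{U1 ∩ U2}`. Suppose `T1, T2 ∈ B(H)` are locally compact
operators of finite propagation with respect to `ρ` satisfying `T_i = P_i T_i P_i` for
`i = 1, 2`, and suppose `T1 + T2` is a compact operator. Then there exists an operator
`T_{12} ∈ B(H)`, locally compact and of finite propagation with respect to `ρ` and satisfying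
`T_{12} = P_{12} T_{12} P_{12}`, such that `T_{12} − T1` and `T_{12} + T2` are compact
operators. -/
theorem difference_supported_on_intersection
    (X : Type*) [MetricSpace X] [ProperSpace X]
    (H : Type*) [NormedAddCommGroup H] [InnerProductSpace ℂ H] [CompleteSpace H]
    (ρ : C₀(X, ℂ) →⋆ₙₐ[ℂ] (H →L[ℂ] H)) (hρ : Nondegenerate ρ)
    (U1 U2 : Set X) (hU1 : IsClosed U1) (hU2 : IsClosed U2)
    (hcover : CoarselyCoversAll U1 U2)
    (T1 T2 : H →L[ℂ] H)
    (hlc1 : LocallyCompactOp ρ T1) (hfp1 : FinitePropagation ρ T1)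
    (hP1 : T1 = projHY ρ U1 ∘L T1 ∘L projHY ρ U1)
    (hlc2 : LocallyCompactOp ρ T2) (hfp2 : FinitePropagation ρ T2)
    (hP2 : T2 = projHY ρ U2 ∘L T2 ∘L projHY ρ U2)
    (hsum : IsCompactOperator ⇑(T1 + T2)) :
    ∃ T12 : H →L[ℂ] H,
      LocallyCompactOp ρ T12 ∧ FinitePropagation ρ T12 ∧
      T12 = projHY ρ (U1 ∩ U2) ∘L T12 ∘L projHY ρ (U1 ∩ U2) ∧
      IsCompactOperator ⇑(T12 - T1) ∧ IsCompactOperator ⇑(T12 + T2) :=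
  difference_supported_on_intersection_general X H ρ U1 U2 hU1 hU2 T1 T2 hlc1 hfp1 hP1 hP2 hsum
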